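/- arXiv:2007.02618 — 3 statements merged into one kernel-verified Lean document; each statement's English description precedes it below -/
import Mathlib

section
/- Let n ≥ 3 and u, v, w > 0, and let A ∈ ℝ^{n×n} be the Toeplitz matrix with A_{ii} = w, A_{i,i+1} = u for i = 1,…,n−1, A_{1,n} = u, A_{i+1,i} = v for i = 1,…,n−1, A_{n,1} = v, and all other entries 0. Then for all t ∈ [0,1], the spectral radius of (1−t)A + tAᵀ equals w + ((1−t)u + tv)^{1−1/n}((1−t)v + tu)^{1/n} + ((1−t)u + tv)^{1/n}((1−t)v + tu)^{1−1/n}. -/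
open Matrix

/-- The spectral radius of a real square matrix: the maximum modulus of its
(complex) eigenvalues. -/
noncomputable def specRad {m : Type*} [Fintype m] [DecidableEq m]
    (M : Matrix m m ℝ) : ℝ :=
  (spectralRadius ℂ (M.map (fun x : ℝ => (x : ℂ)))).toReal

/-- A square matrix is irreducible if its associated directed graph is strongly
connected, i.e. for every pair of indices `i j` some power of the matrix has a
positive `(i,j)` entry. -/
def Irred {m : Type*} [Fintype m] [DecidableEq m] (M : Matrix m m ℝ) : Prop :=
  ∀ i j : m, ∃ k : ℕ, 0 < (M ^ (k + 1)) i j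

/-!
Write `a = (1 - t) u + t v` and `b = (1 - t) v + t u`: the Levinger homotopy of Fiedler's matrix
is again a Fiedler matrix, with super-diagonal `a` and sub-diagonal `b`. For `r = (b / a) ^ (1 / n)`
the positive vector `(r ^ i)ᵢ` is an eigenvector with eigenvalue `w + a r + b / r`; the two corner
entries fit exactly because `a r ^ n = b`. A nonnegative matrix with a positive eigenvector has that
eigenvalue as spectral radius: scaling by the eigenvector turns it into a nonnegative matrix with
constant row sums, whose ∞-operator norm equals that row sum and bounds the spectrum.
-/

open scoped ENNReal

section SpectralRadius

variable {m : Type*} [Fintype m] [DecidableEq m]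

theorem Matrix.mem_spectrum_of_mulVec_eq_smul {R : Type*} [CommRing R] {M : Matrix m m R}
    {x : m → R} (hx : x ≠ 0) {μ : R} (h : M *ᵥ x = μ • x) : μ ∈ spectrum R M := by
  rw [← Matrix.spectrum_toLin']
  exact Module.End.HasEigenvalue.mem_spectrum <| Module.End.hasEigenvalue_of_hasEigenvector
    (Module.End.hasEigenvector_iff.2 ⟨by simpa using h, hx⟩)

attribute [local instance] Matrix.linftyOpNormedRing Matrix.linftyOpNormedAlgebra in
theorem specRad_eq_of_nonneg_of_rowSum_eq [Nonempty m] {M : Matrix m m ℝ}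
    (hM : ∀ i j, 0 ≤ M i j) {s : ℝ} (hs : ∀ i, ∑ j, M i j = s) : specRad M = s := by
  have hs0 : 0 ≤ s := by
    obtain ⟨i⟩ := ‹Nonempty m›
    exact hs i ▸ Finset.sum_nonneg fun j _ => hM i j
  set Mc := M.map ((↑) : ℝ → ℂ)
  have hnorm : ‖Mc‖₊ = s.toNNReal := by
    have hrow : ∀ i, ∑ j, ‖Mc i j‖₊ = s.toNNReal := fun i => by
      rw [← hs i, Real.toNNReal_sum_of_nonneg fun j _ => hM i j]
      refine Finset.sum_congr rfl fun j _ => ?_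
      rw [show ‖Mc i j‖₊ = ‖(M i j : ℂ)‖₊ from rfl, Complex.nnnorm_real,
        Real.nnnorm_of_nonneg (hM i j), Real.toNNReal_of_nonneg (hM i j)]
    simp only [linfty_opNNNorm_def, hrow, Finset.sup_const Finset.univ_nonempty]
  have hmem : (s : ℂ) ∈ spectrum ℂ Mc := by
    refine Matrix.mem_spectrum_of_mulVec_eq_smul (x := fun _ => 1)
      (Function.ne_iff.2 ⟨Classical.arbitrary m, one_ne_zero⟩) ?_
    ext i
    simp [Mc, mulVec, dotProduct, ← hs i]
  have hnorm_s : (‖(s : ℂ)‖₊ : ℝ≥0∞) = ENNReal.ofReal s := by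
    rw [Complex.nnnorm_real, Real.nnnorm_of_nonneg hs0, ENNReal.ofReal,
      Real.toNNReal_of_nonneg hs0]
  suffices spectralRadius ℂ Mc = ENNReal.ofReal s by
    rw [specRad, this, ENNReal.toReal_ofReal hs0]
  refine le_antisymm ?_ ?_
  · calc spectralRadius ℂ Mc ≤ ‖Mc‖₊ := spectrum.spectralRadius_le_nnnorm _
      _ = ENNReal.ofReal s := by rw [hnorm]; rfl
  · exact hnorm_s ▸ le_iSup₂ (α := ℝ≥0∞) (f := fun k _ => ‖k‖₊) _ hmem

theorem specRad_units_conj (U : (Matrix m m ℝ)ˣ) (M : Matrix m m ℝ) :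
    specRad ((U : Matrix m m ℝ) * M * ((U⁻¹ : (Matrix m m ℝ)ˣ) : Matrix m m ℝ)) = specRad M := by
  let φ : Matrix m m ℝ →+* Matrix m m ℂ := (algebraMap ℝ ℂ).mapMatrix
  let Uc := Units.map φ.toMonoidHom U
  have hmap : ((U : Matrix m m ℝ) * M * ((U⁻¹ : (Matrix m m ℝ)ˣ) : Matrix m m ℝ)).map
      ((↑) : ℝ → ℂ) = Uc * M.map ((↑) : ℝ → ℂ) * ((Uc⁻¹ : (Matrix m m ℂ)ˣ) : Matrix m m ℂ) :=
    (map_mul φ _ _).trans (congrArg (· * _) (map_mul φ _ _))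
  simp only [specRad, hmap, spectralRadius, spectrum.units_conjugate]

theorem specRad_eq_of_nonneg_of_mulVec_eq_smul [Nonempty m] {M : Matrix m m ℝ}
    (hM : ∀ i j, 0 ≤ M i j) {d : m → ℝ} (hd : ∀ i, 0 < d i) {s : ℝ} (h : M *ᵥ d = s • d) :
    specRad M = s := by
  let D : (Matrix m m ℝ)ˣ :=
    ⟨diagonal d, diagonal d⁻¹,
      by simp [diagonal_mul_diagonal, mul_inv_cancel₀ (hd _).ne'],
      by simp [diagonal_mul_diagonal, inv_mul_cancel₀ (hd _).ne']⟩
  set M' : Matrix m m ℝ := of fun i j => (d i)⁻¹ * M i j * d j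
  have hconj : M = (D : Matrix m m ℝ) * M' * ((D⁻¹ : (Matrix m m ℝ)ˣ) : Matrix m m ℝ) := by
    ext i j
    simp only [D, M', Units.inv_mk, mul_diagonal, diagonal_mul, of_apply, Pi.inv_apply]
    field_simp [(hd i).ne', (hd j).ne']
  have hM' : ∀ i j, 0 ≤ M' i j := fun i j => by
    have := hd i; have := hd j; have := hM i j; simp only [M', of_apply]; positivity
  have hrow : ∀ i, ∑ j, M' i j = s := fun i => by
    have hi := congrFun h i
    simp only [mulVec, dotProduct, Pi.smul_apply, smul_eq_mul] at hi
    simp only [M', of_apply, mul_assoc, ← Finset.mul_sum, hi]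
    field_simp [(hd i).ne']
  rw [hconj, specRad_units_conj, specRad_eq_of_nonneg_of_rowSum_eq hM' hrow]

end SpectralRadius

def fiedlerMatrix (n : ℕ) (w a b : ℝ) : Matrix (Fin n) (Fin n) ℝ :=
  of fun i j =>
    if (i:ℕ) = (j:ℕ) then w
    else if (j:ℕ) = (i:ℕ) + 1 then a
    else if (i:ℕ) = 0 ∧ (j:ℕ) = n - 1 then a
    else if (i:ℕ) = (j:ℕ) + 1 then b
    else if (i:ℕ) = n - 1 ∧ (j:ℕ) = 0 then b
    else 0

section Fiedler

variable {n : ℕ} {w a b : ℝ}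

theorem fiedlerMatrix_nonneg (hw : 0 ≤ w) (ha : 0 ≤ a) (hb : 0 ≤ b) (i j : Fin n) :
    0 ≤ fiedlerMatrix n w a b i j := by
  simp only [fiedlerMatrix, of_apply]
  split_ifs <;> first | assumption | exact le_rfl

theorem levinger_fiedlerMatrix (u v t : ℝ) :
    (1 - t) • fiedlerMatrix n w u v + t • (fiedlerMatrix n w u v)ᵀ =
      fiedlerMatrix n w ((1 - t) * u + t * v) ((1 - t) * v + t * u) := by
  ext i j
  simp only [fiedlerMatrix, Matrix.add_apply, Matrix.smul_apply, transpose_apply, of_apply,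
    smul_eq_mul]
  split_ifs <;> first | omega | ring

-- For `n ≥ 3` the five index patterns of `fiedlerMatrix` are pairwise disjoint.
theorem fiedlerMatrix_apply_eq_sum (hn : 3 ≤ n) (i j : Fin n) :
    fiedlerMatrix n w a b i j =
      (if (j:ℕ) = i then w else 0) + (if (j:ℕ) = i + 1 then a else 0)
        + (if (j:ℕ) = n - 1 then (if (i:ℕ) = 0 then a else 0) else 0)
        + (if (j:ℕ) = i - 1 then (if (i:ℕ) = 0 then 0 else b) else 0)
        + (if (j:ℕ) = 0 then (if (i:ℕ) = n - 1 then b else 0) else 0) := by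
  have := i.isLt; have := j.isLt
  simp only [fiedlerMatrix, of_apply]
  split_ifs <;> first | omega | ring

theorem fiedlerMatrix_mulVec_pow (hn : 3 ≤ n) {r : ℝ} (hr : r ≠ 0) (h : a * r ^ n = b) :
    fiedlerMatrix n w a b *ᵥ (fun i : Fin n => r ^ (i:ℕ)) =
      (w + a * r + b / r) • fun i : Fin n => r ^ (i:ℕ) := by
  ext i
  simp only [mulVec, dotProduct, Pi.smul_apply, smul_eq_mul, fiedlerMatrix_apply_eq_sum hn]
  rw [Fin.sum_univ_eq_sum_range (fun j => ((if j = i then w else 0) + (if j = i + 1 then a else 0)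
        + (if j = n - 1 then (if (i:ℕ) = 0 then a else 0) else 0)
        + (if j = i - 1 then (if (i:ℕ) = 0 then 0 else b) else 0)
        + (if j = 0 then (if (i:ℕ) = n - 1 then b else 0) else 0)) * r ^ j)]
  simp only [add_mul, ite_mul, zero_mul, Finset.sum_add_distrib, Finset.sum_ite_eq',
    Finset.mem_range]
  obtain ⟨p, hp⟩ := i
  obtain ⟨k, rfl⟩ : ∃ k, n = k + 1 := ⟨n - 1, by omega⟩
  simp only [hp, Nat.add_sub_cancel, Nat.lt_succ_self, Nat.succ_pos, show p - 1 < k + 1 by omega,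
    if_true, pow_zero, mul_one]
  rw [← h]
  rcases Nat.eq_zero_or_pos p with rfl | hp0
  · simp only [show (0:ℕ) + 1 < k + 1 by omega, show (0:ℕ) ≠ k by omega, if_true, if_false]
    field_simp
    ring
  obtain ⟨q, rfl⟩ : ∃ q, p = q + 1 := ⟨p - 1, by omega⟩
  simp only [Nat.add_sub_cancel, Nat.succ_ne_zero, if_false]
  rcases Nat.lt_or_ge (q + 1 + 1) (k + 1) with hq | hq
  · simp only [hq, show q + 1 ≠ k by omega, if_true, if_false]
    field_simp
    ring
  · obtain rfl : q + 1 = k := by omega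
    simp only [lt_irrefl, if_false, if_true]
    field_simp
    ring

end Fiedler

theorem Real.mul_div_rpow_one_div_pow {a b : ℝ} (ha : 0 < a) (hb : 0 < b) {n : ℕ}
    (hn : n ≠ 0) :
    a * ((b / a) ^ (1 / (n:ℝ))) ^ n = b := by
  rw [← Real.rpow_natCast, ← Real.rpow_mul (div_pos hb ha).le,
    one_div_mul_cancel (Nat.cast_ne_zero.2 hn), Real.rpow_one]
  field_simp

theorem Real.mul_div_rpow_one_div_add_div {a b : ℝ} (ha : 0 < a) (hb : 0 < b) (n : ℕ) :
    a * (b / a) ^ (1 / (n:ℝ)) + b / (b / a) ^ (1 / (n:ℝ)) =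
      a ^ (1 - 1 / (n:ℝ)) * b ^ (1 / (n:ℝ)) + a ^ (1 / (n:ℝ)) * b ^ (1 - 1 / (n:ℝ)) := by
  rw [Real.div_rpow hb.le ha.le, Real.rpow_sub ha, Real.rpow_sub hb, Real.rpow_one, Real.rpow_one]
  have := Real.rpow_pos_of_pos ha (1 / (n:ℝ))
  have := Real.rpow_pos_of_pos hb (1 / (n:ℝ))
  field_simp

/-- Closed formula for the spectral radius of the Levinger homotopy of
Fiedler's 3-parameter Toeplitz matrix with `u, v, w > 0`.  The powers are real
powers (`Real.rpow`). -/
theorem specRad_levinger_fiedler_toeplitz {n : ℕ} (hn : 3 ≤ n) (u v w : ℝ)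
    (hu : 0 < u) (hv : 0 < v) (hw : 0 < w)
    (A : Matrix (Fin n) (Fin n) ℝ)
    (hA : ∀ i j : Fin n, A i j =
      if (i:ℕ) = (j:ℕ) then w
      else if (j:ℕ) = (i:ℕ) + 1 then u
      else if (i:ℕ) = 0 ∧ (j:ℕ) = n - 1 then u
      else if (i:ℕ) = (j:ℕ) + 1 then v
      else if (i:ℕ) = n - 1 ∧ (j:ℕ) = 0 then v
      else 0) :
    ∀ t ∈ Set.Icc (0:ℝ) 1,
      specRad ((1 - t) • A + t • Aᵀ) =
        w + ((1 - t)*u + t*v) ^ (1 - 1/(n:ℝ)) * ((1 - t)*v + t*u) ^ (1/(n:ℝ))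
          + ((1 - t)*u + t*v) ^ (1/(n:ℝ)) * ((1 - t)*v + t*u) ^ (1 - 1/(n:ℝ)) := by
  rintro t ⟨ht0, ht1⟩
  obtain rfl : A = fiedlerMatrix n w u v := Matrix.ext hA
  have ha : 0 < (1 - t) * u + t * v :=
    convex_Ioi (0:ℝ) hu hv (sub_nonneg.2 ht1) ht0 (sub_add_cancel 1 t)
  have hb : 0 < (1 - t) * v + t * u :=
    convex_Ioi (0:ℝ) hv hu (sub_nonneg.2 ht1) ht0 (sub_add_cancel 1 t)
  set r := (((1 - t) * v + t * u) / ((1 - t) * u + t * v)) ^ (1 / (n:ℝ))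
  have hr : 0 < r := by positivity
  have : Nonempty (Fin n) := ⟨⟨0, by omega⟩⟩
  rw [levinger_fiedlerMatrix, specRad_eq_of_nonneg_of_mulVec_eq_smul
    (fiedlerMatrix_nonneg hw.le ha.le hb.le) (fun i => pow_pos hr _)
    (fiedlerMatrix_mulVec_pow hn hr.ne' (Real.mul_div_rpow_one_div_pow ha hb (by omega))),
    add_assoc, Real.mul_div_rpow_one_div_add_div ha hb, add_assoc]
end

section
/- Let n ≥ 2 and let A ∈ ℝ^{n×n} be a nonnegative weighted shift matrix: A_{i,i+1} = c_i ≥ 0 for i = 1,…,n−1 and all other entries 0, with c_i > 0 for at least one i. Then Levinger's function r(t) := ρ((1−t)A + tAᵀ) is strictly concave on t ∈ (0,1). -/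
/-
Conjugating by `D = diag(q^i)` multiplies the superdiagonal by `q` and the subdiagonal by
`q⁻¹`. For `q = √(t / (1 - t))` this turns `(1 - t) A + t Aᵀ` into `√((1 - t) t) (A + Aᵀ)`,
so `r(t) = √((1 - t) t) ρ(A + Aᵀ)` on `(0, 1)`. As a nonzero symmetric matrix, `A + Aᵀ` has
a nonzero real eigenvalue, so `ρ(A + Aᵀ) > 0`; and `t ↦ √((1 - t) t)` is strictly concave.
-/

open Matrix

open Set
open scoped ENNReal

theorem StrictConcaveOn.mul_const {E : Type*} [AddCommMonoid E] [SMul ℝ E] {s : Set E}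
    {f : E → ℝ} (hf : StrictConcaveOn ℝ s f) {c : ℝ} (hc : 0 < c) :
    StrictConcaveOn ℝ s fun x => f x * c := by
  refine ⟨hf.1, fun x hx y hy hxy a b ha hb hab => ?_⟩
  have := mul_lt_mul_of_pos_right (hf.2 hx hy hxy ha hb hab) hc
  simp only [smul_eq_mul] at this ⊢
  linarith

theorem StrictConcaveOn.sqrt {E : Type*} [AddCommMonoid E] [SMul ℝ E] {s : Set E}
    {f : E → ℝ} (hf : StrictConcaveOn ℝ s f) (hf₀ : ∀ x ∈ s, 0 ≤ f x) :
    StrictConcaveOn ℝ s fun x => √(f x) := by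
  refine ⟨hf.1, fun x hx y hy hxy a b ha hb hab => ?_⟩
  calc a • √(f x) + b • √(f y) ≤ √(a • f x + b • f y) :=
        Real.strictConcaveOn_sqrt.concaveOn.2 (hf₀ x hx) (hf₀ y hy) ha.le hb.le hab
    _ < √(f (a • x + b • y)) := by
        refine Real.sqrt_lt_sqrt ?_ (hf.2 hx hy hxy ha hb hab)
        have := hf₀ x hx
        have := hf₀ y hy
        simp only [smul_eq_mul]
        positivity

theorem strictConcaveOn_one_sub_mul : StrictConcaveOn ℝ univ fun t : ℝ => (1 - t) * t := by
  refine ⟨convex_univ, fun x _ y _ hxy a b ha hb hab => ?_⟩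
  have hgap : 0 < a * b * (x - y) ^ 2 := by
    have := sub_ne_zero.mpr hxy
    positivity
  obtain rfl : b = 1 - a := by linarith
  simp only [smul_eq_mul]
  linear_combination hgap

theorem spectralRadius_smul {𝕜 A : Type*} [NormedField 𝕜] [Ring A] [Algebra 𝕜 A]
    (k : 𝕜) (a : A) :
    spectralRadius 𝕜 (k • a) = ‖k‖₊ * spectralRadius 𝕜 a := by
  rcases eq_or_ne k 0 with rfl | hk
  · simp
  · have hσ := spectrum.unit_smul_eq_smul a (Units.mk0 k hk)
    simp only [Units.smul_mk0] at hσ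
    simp only [spectralRadius, hσ, ← Set.image_smul, iSup_image, smul_eq_mul, nnnorm_mul,
      ENNReal.coe_mul, ENNReal.mul_iSup]

section

variable {m : Type*} [Fintype m] [DecidableEq m]

theorem Matrix.spectralRadius_ne_top (M : Matrix m m ℂ) : spectralRadius ℂ M ≠ ⊤ := by
  have := M.finite_spectrum.to_subtype
  rw [spectralRadius, iSup_subtype']
  exact iSup_ne_top fun _ => ENNReal.coe_ne_top

theorem specRad_smul (u : ℝ) (M : Matrix m m ℝ) :
    specRad (u • M) = |u| * specRad M := by
  have hmap :
      (u • M).map (fun x : ℝ => (x : ℂ)) = (u : ℂ) • M.map (fun x : ℝ => (x : ℂ)) := by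
    ext i j
    simp
  rw [specRad, hmap, spectralRadius_smul, ENNReal.toReal_mul, specRad]
  simp

theorem specRad_eq_of_mul_eq_mul {M N P : Matrix m m ℝ} (hP : IsUnit P)
    (h : M * P = P * N) :
    specRad M = specRad N := by
  obtain ⟨U, rfl⟩ := hP
  have hM : M = U * N * (↑U⁻¹ : Matrix m m ℝ) := by rw [← h, Units.mul_inv_cancel_right]
  let V := Units.map (Complex.ofRealHom.mapMatrix (m := m) : Matrix m m ℝ →* Matrix m m ℂ) U
  have hmap : M.map (fun x : ℝ => (x : ℂ)) =
      V * N.map (fun x : ℝ => (x : ℂ)) * (↑V⁻¹ : Matrix m m ℂ) := by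
    rw [hM]
    change Complex.ofRealHom.mapMatrix _ = _
    rw [map_mul, map_mul]
    rfl
  rw [specRad, specRad, hmap, spectralRadius, spectrum.units_conjugate, spectralRadius]

theorem specRad_pos_of_isSymm {S : Matrix m m ℝ} (hS : S.IsSymm) (hS0 : S ≠ 0) :
    0 < specRad S := by
  set Sc := S.map (fun x : ℝ => (x : ℂ))
  have hSc : Sc.IsHermitian :=
    (isHermitian_iff_isSymm.mpr hS).map _ fun x => (Complex.conj_ofReal x).symm
  have hSc0 : Sc ≠ 0 := fun h => hS0 <| by
    ext i j
    simpa [Sc] using congrFun (congrFun h i) j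
  obtain ⟨i, hi⟩ := Function.ne_iff.mp (hSc.eigenvalues_eq_zero_iff.not.mpr hSc0)
  have hmem : (hSc.eigenvalues i : ℂ) ∈ spectrum ℂ Sc := by
    rw [hSc.spectrum_eq_image_range]
    exact mem_image_of_mem _ (mem_range_self i)
  refine ENNReal.toReal_pos (ne_of_gt ?_) (Matrix.spectralRadius_ne_top Sc)
  refine lt_of_lt_of_le ?_
    (le_iSup₂ (f := fun k (_ : k ∈ spectrum ℂ Sc) => (‖k‖₊ : ℝ≥0∞)) _ hmem)
  simpa using hi

end

def IsWeightedShift {n : ℕ} {R : Type*} [Zero R] (A : Matrix (Fin n) (Fin n) R) : Prop :=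
  ∀ i j : Fin n, (j : ℕ) ≠ i + 1 → A i j = 0

namespace IsWeightedShift

variable {n : ℕ} {R : Type*} [CommSemiring R] {A : Matrix (Fin n) (Fin n) R}

theorem mul_diagonal_pow (hA : IsWeightedShift A) (q : R) :
    A * diagonal (fun i : Fin n => q ^ (i : ℕ)) =
      q • (diagonal (fun i : Fin n => q ^ (i : ℕ)) * A) := by
  ext i j
  rw [mul_diagonal, Matrix.smul_apply, diagonal_mul, smul_eq_mul]
  by_cases hij : (j : ℕ) = i + 1
  · rw [hij, pow_succ]
    ring
  · simp [hA i j hij]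

theorem transpose_mul_diagonal_pow (hA : IsWeightedShift A) (q : R) :
    q • (Aᵀ * diagonal (fun i : Fin n => q ^ (i : ℕ))) =
      diagonal (fun i : Fin n => q ^ (i : ℕ)) * Aᵀ := by
  ext i j
  rw [Matrix.smul_apply, mul_diagonal, diagonal_mul, smul_eq_mul, transpose_apply]
  by_cases hij : (i : ℕ) = j + 1
  · rw [hij, pow_succ]
    ring
  · simp [hA j i hij]

end IsWeightedShift

theorem IsWeightedShift.specRad_smul_add_smul_transpose {n : ℕ} {A : Matrix (Fin n) (Fin n) ℝ}
    (hA : IsWeightedShift A) {a b : ℝ} (ha : 0 < a) (hb : 0 < b) :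
    specRad (a • A + b • Aᵀ) = √(a * b) * specRad (A + Aᵀ) := by
  set q := √b / √a
  set c := √a * √b
  have hq : 0 < q := by positivity
  have haq : a * q = c := by
    simp only [q, c]
    field_simp
    exact (Real.sq_sqrt ha.le).symm
  have hqc : q * c = b := by
    simp only [q, c]
    field_simp
    exact Real.sq_sqrt hb.le
  have hD : IsUnit (diagonal fun i : Fin n => q ^ (i : ℕ)) :=
    isUnit_diagonal.mpr (Pi.isUnit_iff.mpr fun i => (pow_pos hq _).ne'.isUnit)
  have hsim : (a • A + b • Aᵀ) * diagonal (fun i : Fin n => q ^ (i : ℕ)) =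
      diagonal (fun i : Fin n => q ^ (i : ℕ)) * (c • (A + Aᵀ)) := by
    rw [add_mul, smul_mul_assoc, smul_mul_assoc, hA.mul_diagonal_pow, ← hqc, mul_comm q,
      mul_smul c q, hA.transpose_mul_diagonal_pow, smul_smul, haq, mul_smul_comm, mul_add,
      smul_add]
  rw [specRad_eq_of_mul_eq_mul hD hsim, specRad_smul, abs_of_nonneg (by positivity),
    Real.sqrt_mul ha.le]

theorem levinger_weighted_shift_strictConcave_general {n : ℕ}
    (A : Matrix (Fin n) (Fin n) ℝ)
    (hshift : ∀ i j : Fin n, (j:ℕ) ≠ (i:ℕ) + 1 → A i j = 0)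
    (hpos : ∃ i j : Fin n, (j:ℕ) = (i:ℕ) + 1 ∧ 0 < A i j) :
    StrictConcaveOn ℝ (Set.Ioo (0:ℝ) 1)
      (fun t : ℝ => specRad ((1 - t) • A + t • Aᵀ)) := by
  obtain ⟨i, j, hij, hAij⟩ := hpos
  have hS : 0 < specRad (A + Aᵀ) := by
    refine specRad_pos_of_isSymm (isSymm_add_transpose_self A) fun h => hAij.ne' ?_
    simpa [hshift j i (by omega)] using congrFun (congrFun h i) j
  have hconc := ((strictConcaveOn_one_sub_mul.subset (subset_univ _) (convex_Ioo 0 1)).sqrt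
    fun t ht => mul_nonneg (sub_nonneg.mpr ht.2.le) ht.1.le).mul_const hS
  exact hconc.congr fun t ht =>
    (IsWeightedShift.specRad_smul_add_smul_transpose hshift (sub_pos.mpr ht.2) ht.1).symm

/-- Levinger's function of a nonnegative weighted shift matrix (nonzero entries
only on the superdiagonal) with at least one positive weight is strictly
concave on `(0,1)`. -/
theorem levinger_weighted_shift_strictConcave {n : ℕ} (hn : 2 ≤ n)
    (A : Matrix (Fin n) (Fin n) ℝ)
    (hshift : ∀ i j : Fin n, (j:ℕ) ≠ (i:ℕ) + 1 → A i j = 0)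
    (hnn : ∀ i j, 0 ≤ A i j)
    (hpos : ∃ i j : Fin n, (j:ℕ) = (i:ℕ) + 1 ∧ 0 < A i j) :
    StrictConcaveOn ℝ (Set.Ioo (0:ℝ) 1)
      (fun t : ℝ => specRad ((1 - t) • A + t • Aᵀ)) :=
  levinger_weighted_shift_strictConcave_general A hshift hpos
end

section
/- Let S ∈ ℝ^{n×n} be a nonnegative irreducible symmetric matrix and K ∈ ℝ^{n×n} a skew-symmetric matrix such that A := S + K is nonnegative. Let Q be an orthogonal matrix diagonalizing S, QᵀSQ = diag(ρ(S), λ₂, …, λ_n), with the first column of Q equal to the Perron vector of S. Then Levinger's function t ↦ ρ((1−t)A + tAᵀ) is constant on [0,1] if and only if K₁ := QᵀKQ has its first row and first column entirely zero, i.e., K₁ = [0] ⊕ K₂ for some skew-symmetric K₂ ∈ ℝ^{(n−1)×(n−1)}. -/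
/-!
If `K x = 0` for the Perron vector `x` of `S`, then `x` is a positive eigenvector, for the
eigenvalue `ρ(S)`, of every nonnegative matrix `(1 - t) A + t Aᵀ = S + (1 - 2t) K`, and a positive
eigenvector pins the spectral radius (Collatz–Wielandt).

Conversely, constancy gives `ρ(A) = ρ(A / 2 + Aᵀ / 2) = ρ(S)`. Take an eigenvector `z` of `A` for
an eigenvalue of modulus `ρ(S)` and put `u = |z|`, so that `ρ(S) u ≤ A u` entrywise. Since
`uᵀ K u = 0`, this gives `ρ(S) uᵀu ≤ uᵀ S u ≤ ρ(S) uᵀu`, the upper bound because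
`ρ(S) I - S = Q diag(ρ(S) - dᵢ) Qᵀ` is positive semidefinite. Equality makes `u` an eigenvector
of `S`, hence (by irreducibility) a positive multiple of `x`; then `K u ≥ 0` together with
`uᵀ K u = 0` forces `K x = 0`. Finally, the first column of `QᵀKQ` is `Qᵀ K x`, and its first
row is the negative of its first column.
-/

open Matrix

variable {ι : Type*} [Fintype ι]

theorem Matrix.mem_spectrum_iff_exists_mulVec_eq_smul {K : Type*} [Field K] [DecidableEq ι]
    {M : Matrix ι ι K} {μ : K} : μ ∈ spectrum K M ↔ ∃ v ≠ 0, M *ᵥ v = μ • v := by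
  rw [spectrum.mem_iff, isUnit_iff_isUnit_det, isUnit_iff_ne_zero, not_not,
    ← exists_mulVec_eq_zero_iff]
  simp only [Algebra.algebraMap_eq_smul_one, sub_mulVec, smul_mulVec, one_mulVec, sub_eq_zero,
    eq_comm]

theorem spectrum.nnnorm_le_spectralRadius {𝕜 A : Type*} [NormedField 𝕜] [Ring A] [Algebra 𝕜 A]
    {a : A} {k : 𝕜} (hk : k ∈ spectrum 𝕜 a) : (‖k‖₊ : ENNReal) ≤ spectralRadius 𝕜 a :=
  le_iSup₂ (f := fun k (_ : k ∈ spectrum 𝕜 a) => (‖k‖₊ : ENNReal)) k hk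

theorem Matrix.exists_spectralRadius_eq_nnnorm [DecidableEq ι] [Nonempty ι]
    (A : Matrix ι ι ℂ) : ∃ μ ∈ spectrum ℂ A, spectralRadius ℂ A = ‖μ‖₊ := by
  obtain ⟨μ, hμ, hmax⟩ := Set.exists_max_image _ (‖·‖₊) A.finite_spectrum
    (spectrum.nonempty_of_isAlgClosed_of_finiteDimensional ℂ A)
  exact ⟨μ, hμ, le_antisymm (iSup₂_le fun ν hν => mod_cast hmax ν hν)
    (spectrum.nnnorm_le_spectralRadius hμ)⟩

theorem le_of_forall_mul_le_mulVec {M : Matrix ι ι ℝ} (hM : ∀ i j, 0 ≤ M i j) {x : ι → ℝ}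
    (hx : ∀ i, 0 < x i) {r : ℝ} (hMx : M *ᵥ x = r • x) {u : ι → ℝ} (hu : ∀ i, 0 ≤ u i)
    (hu0 : u ≠ 0) {a : ℝ} (hau : ∀ i, a * u i ≤ (M *ᵥ u) i) : a ≤ r := by
  obtain ⟨j, hj⟩ := Function.ne_iff.mp hu0
  obtain ⟨i₀, -, hmax⟩ := Finset.exists_max_image Finset.univ (fun i => u i / x i)
    ⟨j, Finset.mem_univ j⟩
  set t := u i₀ / x i₀
  have hut : ∀ i, u i ≤ t * x i := fun i => (div_le_iff₀ (hx i)).mp (hmax i (Finset.mem_univ i))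
  have hui₀ : u i₀ = t * x i₀ := (div_mul_cancel₀ _ (hx i₀).ne').symm
  have ht : 0 < t := (div_pos ((hu j).lt_of_ne' hj) (hx j)).trans_le (hmax j (Finset.mem_univ j))
  have hMu : (M *ᵥ u) i₀ ≤ r * u i₀ :=
    calc (M *ᵥ u) i₀ ≤ (M *ᵥ (t • x)) i₀ :=
          Finset.sum_le_sum fun l _ => mul_le_mul_of_nonneg_left (hut l) (hM i₀ l)
      _ = r * u i₀ := by rw [mulVec_smul, hMx, hui₀]; simp only [Pi.smul_apply, smul_eq_mul]; ring
  exact le_of_mul_le_mul_right ((hau i₀).trans hMu) (hui₀ ▸ mul_pos ht (hx i₀))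

theorem norm_mul_norm_le_mulVec_norm {𝕜 : Type*} [RCLike 𝕜] {M : Matrix ι ι ℝ}
    (hM : ∀ i j, 0 ≤ M i j) {z : ι → 𝕜} {μ : 𝕜} (hz : M.map (↑) *ᵥ z = μ • z) (i : ι) :
    ‖μ‖ * ‖z i‖ ≤ (M *ᵥ fun j => ‖z j‖) i :=
  calc ‖μ‖ * ‖z i‖ = ‖∑ j, (M i j : 𝕜) * z j‖ := by
        rw [← norm_mul, ← smul_eq_mul, ← Pi.smul_apply, ← hz]; rfl
    _ ≤ (M *ᵥ fun j => ‖z j‖) i := (norm_sum_le _ _).trans_eq <| Finset.sum_congr rfl fun j _ => by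
        rw [norm_mul, RCLike.norm_ofReal, abs_of_nonneg (hM i j)]

theorem norm_le_of_mulVec_eq_smul {𝕜 : Type*} [RCLike 𝕜] {M : Matrix ι ι ℝ}
    (hM : ∀ i j, 0 ≤ M i j) {x : ι → ℝ} (hx : ∀ i, 0 < x i) {r : ℝ} (hMx : M *ᵥ x = r • x)
    {z : ι → 𝕜} (hz0 : z ≠ 0) {μ : 𝕜} (hz : M.map (↑) *ᵥ z = μ • z) : ‖μ‖ ≤ r :=
  le_of_forall_mul_le_mulVec hM hx hMx (fun i => norm_nonneg (z i))
    (fun h => hz0 (funext fun i => norm_eq_zero.mp (congrFun h i)))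
    (norm_mul_norm_le_mulVec_norm hM hz)

section SpectralRadius

variable [DecidableEq ι] [Nonempty ι]

theorem exists_mulVec_eq_smul_norm_eq_specRad (M : Matrix ι ι ℝ) :
    ∃ μ : ℂ, ∃ z ≠ 0, M.map (fun a : ℝ => (a : ℂ)) *ᵥ z = μ • z ∧ ‖μ‖ = specRad M := by
  obtain ⟨μ, hμ, hrad⟩ := (M.map (fun a : ℝ => (a : ℂ))).exists_spectralRadius_eq_nnnorm
  obtain ⟨z, hz0, hz⟩ := mem_spectrum_iff_exists_mulVec_eq_smul.mp hμ
  exact ⟨μ, z, hz0, hz, by rw [specRad, hrad]; rfl⟩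

theorem specRad_eq_of_pos_eigenvector {M : Matrix ι ι ℝ} (hM : ∀ i j, 0 ≤ M i j) {x : ι → ℝ}
    (hx : ∀ i, 0 < x i) {r : ℝ} (hMx : M *ᵥ x = r • x) : specRad M = r := by
  obtain ⟨μ, hμ, hrad⟩ := (M.map (fun a : ℝ => (a : ℂ))).exists_spectralRadius_eq_nnnorm
  have hspec : specRad M = ‖μ‖ := by rw [specRad, hrad]; rfl
  obtain ⟨z, hz0, hz⟩ := mem_spectrum_iff_exists_mulVec_eq_smul.mp hμ
  obtain ⟨i⟩ := ‹Nonempty ι›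
  have hr : 0 ≤ r := by
    refine nonneg_of_mul_nonneg_left ?_ (hx i)
    rw [← smul_eq_mul, ← Pi.smul_apply, ← hMx]
    exact Finset.sum_nonneg fun j _ => mul_nonneg (hM i j) (hx j).le
  have hr_mem : (r : ℂ) ∈ spectrum ℂ (M.map (fun a : ℝ => (a : ℂ))) := by
    refine mem_spectrum_iff_exists_mulVec_eq_smul.mpr
      ⟨fun j => (x j : ℂ), fun h => (hx i).ne' ?_, ?_⟩
    · simpa using congrFun h i
    · ext j
      have h := congrFun hMx j
      simp only [mulVec, dotProduct, map_apply, Pi.smul_apply, smul_eq_mul] at h ⊢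
      exact_mod_cast h
  have hle : ‖(r : ℂ)‖₊ ≤ ‖μ‖₊ := by
    rw [← ENNReal.coe_le_coe, ← hrad]
    exact spectrum.nnnorm_le_spectralRadius hr_mem
  refine hspec ▸ le_antisymm (norm_le_of_mulVec_eq_smul hM hx hMx hz0 hz) ?_
  simpa [abs_of_nonneg hr] using (NNReal.coe_le_coe.mpr hle)

end SpectralRadius

section Diagonalization

variable [DecidableEq ι] {Q S : Matrix ι ι ℝ} {d : ι → ℝ}

theorem mulVec_col_eq_smul_of_conj_eq_diagonal (hQ : Qᵀ * Q = 1)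
    (hdiag : Qᵀ * S * Q = diagonal d) (i : ι) : S *ᵥ (fun l => Q l i) = d i • fun l => Q l i := by
  have hSQ : S * Q = Q * diagonal d := by
    rw [← hdiag, ← Matrix.mul_assoc, ← Matrix.mul_assoc, mul_eq_one_comm.mp hQ, Matrix.one_mul]
  ext l
  have h := congrFun (congrFun hSQ l) i
  rw [mul_apply, mul_diagonal] at h
  simpa [mulVec, dotProduct, mul_comm] using h

theorem le_of_conj_eq_diagonal (hS : ∀ i j, 0 ≤ S i j) {x : ι → ℝ} (hx : ∀ i, 0 < x i)
    {r : ℝ} (hSx : S *ᵥ x = r • x) (hQ : Qᵀ * Q = 1) (hdiag : Qᵀ * S * Q = diagonal d)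
    (i : ι) : d i ≤ r := by
  have hcol : (fun l => Q l i) ≠ 0 := fun h => by
    simpa [mul_apply, congrFun h] using congrFun (congrFun hQ i) i
  refine (le_abs_self _).trans (norm_le_of_mulVec_eq_smul (𝕜 := ℝ) hS hx hSx hcol ?_)
  simpa using mulVec_col_eq_smul_of_conj_eq_diagonal hQ hdiag i

theorem posSemidef_smul_one_sub_of_conj_eq_diagonal (hQ : Qᵀ * Q = 1)
    (hdiag : Qᵀ * S * Q = diagonal d) {c : ℝ} (hd : ∀ i, d i ≤ c) : (c • 1 - S).PosSemidef := by
  have hQQ : Q * Qᵀ = 1 := mul_eq_one_comm.mp hQ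
  have hS : S = Q * diagonal d * Qᵀ := by
    rw [← hdiag]
    simp only [← Matrix.mul_assoc, hQQ, Matrix.one_mul]
    rw [Matrix.mul_assoc, hQQ, Matrix.mul_one]
  have h : c • 1 - S = Q * diagonal (fun i => c - d i) * Qᵀ := by
    rw [hS, ← diagonal_sub, ← smul_one_eq_diagonal, Matrix.mul_sub, Matrix.sub_mul,
      Matrix.mul_smul, Matrix.smul_mul, Matrix.mul_one, hQQ]
  rw [h, ← conjTranspose_eq_transpose_of_trivial]
  exact (PosSemidef.diagonal fun i => sub_nonneg.mpr (hd i)).mul_mul_conjTranspose_same Q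

end Diagonalization

theorem Matrix.pow_mulVec_eq_smul {R : Type*} [CommSemiring R] [DecidableEq ι]
    {M : Matrix ι ι R} {r : R} {v : ι → R} (h : M *ᵥ v = r • v) (k : ℕ) :
    (M ^ k) *ᵥ v = r ^ k • v := by
  induction k with
  | zero => simp
  | succ k ih => rw [pow_succ, ← mulVec_mulVec, h, mulVec_smul, ih, smul_smul, pow_succ']

section Irreducible

variable [DecidableEq ι] {S : Matrix ι ι ℝ} {r : ℝ}

theorem Irred.pos_of_nonneg_eigenvector (hS : Irred S) (hSnn : ∀ i j, 0 ≤ S i j)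
    {u : ι → ℝ} (hu : ∀ i, 0 ≤ u i) (hu0 : u ≠ 0) (hSu : S *ᵥ u = r • u) (i : ι) : 0 < u i := by
  refine (hu i).lt_of_ne' fun hi => ?_
  obtain ⟨j, hj⟩ := Function.ne_iff.mp hu0
  obtain ⟨k, hk⟩ := hS i j
  have hzero : ((S ^ (k + 1)) *ᵥ u) i = 0 := by
    rw [pow_mulVec_eq_smul hSu, Pi.smul_apply, hi, smul_zero]
  have hpos : 0 < ((S ^ (k + 1)) *ᵥ u) i :=
    (mul_pos hk ((hu j).lt_of_ne' hj)).trans_le <|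
      Finset.single_le_sum (f := fun l => (S ^ (k + 1)) i l * u l)
        (fun l _ => mul_nonneg (pow_apply_nonneg hSnn _ i l) (hu l)) (Finset.mem_univ j)
  exact hpos.ne' hzero

theorem Irred.eq_smul_of_nonneg_eigenvector (hS : Irred S) (hSnn : ∀ i j, 0 ≤ S i j)
    {x : ι → ℝ} (hx : ∀ i, 0 < x i) (hSx : S *ᵥ x = r • x) {u : ι → ℝ} (hu : ∀ i, 0 ≤ u i)
    (hSu : S *ᵥ u = r • u) : ∃ c : ℝ, u = c • x := by
  rcases eq_or_ne u 0 with rfl | hu0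
  · exact ⟨0, (zero_smul ℝ x).symm⟩
  obtain ⟨j, -⟩ := Function.ne_iff.mp hu0
  obtain ⟨i₀, -, hmin⟩ := Finset.exists_min_image Finset.univ (fun i => u i / x i)
    ⟨j, Finset.mem_univ j⟩
  -- `c` is the largest multiple with `c • x ≤ u`, so `u - c • x` is a nonnegative eigenvector
  -- vanishing at `i₀`, which irreducibility only allows for the zero vector.
  set c := u i₀ / x i₀
  refine ⟨c, sub_eq_zero.mp ?_⟩
  by_contra hw0
  have hw : ∀ i, 0 ≤ (u - c • x) i := fun i => by
    simpa [sub_nonneg] using (le_div_iff₀ (hx i)).mp (hmin i (Finset.mem_univ i))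
  have hSw : S *ᵥ (u - c • x) = r • (u - c • x) := by
    rw [mulVec_sub, mulVec_smul, hSu, hSx, smul_sub, smul_comm]
  have := hS.pos_of_nonneg_eigenvector hSnn hw hw0 hSw i₀
  simp [c, div_mul_cancel₀ _ (hx i₀).ne'] at this

end Irreducible

theorem dotProduct_mulVec_self_eq_zero_of_transpose_eq_neg {K : Matrix ι ι ℝ} (hK : Kᵀ = -K)
    (u : ι → ℝ) : u ⬝ᵥ (K *ᵥ u) = 0 := by
  have h : u ⬝ᵥ (K *ᵥ u) = -(u ⬝ᵥ (K *ᵥ u)) :=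
    calc u ⬝ᵥ (K *ᵥ u) = (Kᵀ *ᵥ u) ⬝ᵥ u := by rw [mulVec_transpose, ← dotProduct_mulVec]
      _ = -(u ⬝ᵥ (K *ᵥ u)) := by rw [hK, neg_mulVec, neg_dotProduct, dotProduct_comm]
  linarith

theorem eq_zero_of_dotProduct_eq_zero_of_pos {u v : ι → ℝ} (hu : ∀ i, 0 < u i)
    (hv : ∀ i, 0 ≤ v i) (h : u ⬝ᵥ v = 0) : v = 0 := funext fun i =>
  (mul_eq_zero.mp <| (Finset.sum_eq_zero_iff_of_nonneg fun j _ => mul_nonneg (hu j).le (hv j)).mp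
    h i (Finset.mem_univ i)).resolve_left (hu i).ne'

section SkewPerturbation

variable [DecidableEq ι] {S K : Matrix ι ι ℝ} {x : ι → ℝ} {r : ℝ}

theorem mulVec_eq_smul_of_forall_mul_le_add_mulVec (hpsd : (r • 1 - S).PosSemidef)
    (hK : Kᵀ = -K) {u : ι → ℝ} (hu : ∀ i, 0 ≤ u i) (hAu : ∀ i, r * u i ≤ ((S + K) *ᵥ u) i) :
    S *ᵥ u = r • u := by
  have hq : u ⬝ᵥ ((r • 1 - S) *ᵥ u) = u ⬝ᵥ (r • u - (S + K) *ᵥ u) := by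
    rw [sub_mulVec, add_mulVec, smul_mulVec, one_mulVec, dotProduct_sub, dotProduct_sub,
      dotProduct_add, dotProduct_mulVec_self_eq_zero_of_transpose_eq_neg hK, add_zero]
  have hzero : u ⬝ᵥ ((r • 1 - S) *ᵥ u) = 0 := by
    refine le_antisymm ?_ (by simpa using hpsd.dotProduct_mulVec_nonneg u)
    rw [hq]
    exact Finset.sum_nonpos fun i _ => mul_nonpos_of_nonneg_of_nonpos (hu i)
      (by simpa using hAu i)
  have := (hpsd.dotProduct_mulVec_zero_iff u).mp (by simpa using hzero)
  rwa [sub_mulVec, smul_mulVec, one_mulVec, sub_eq_zero, eq_comm] at this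

theorem mulVec_eq_zero_of_specRad_add_eq [Nonempty ι] (hS : Irred S)
    (hSnn : ∀ i j, 0 ≤ S i j) (hK : Kᵀ = -K) (hA : ∀ i j, 0 ≤ (S + K) i j)
    (hx : ∀ i, 0 < x i) (hSx : S *ᵥ x = r • x) (hpsd : (r • 1 - S).PosSemidef)
    (hrad : specRad (S + K) = r) : K *ᵥ x = 0 := by
  obtain ⟨μ, z, hz0, hz, hμ⟩ := exists_mulVec_eq_smul_norm_eq_specRad (S + K)
  set u : ι → ℝ := fun i => ‖z i‖
  have hu : ∀ i, 0 ≤ u i := fun i => norm_nonneg _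
  have hu0 : u ≠ 0 := fun h => hz0 (funext fun i => norm_eq_zero.mp (congrFun h i))
  have hAu : ∀ i, r * u i ≤ ((S + K) *ᵥ u) i := hrad ▸ hμ ▸ norm_mul_norm_le_mulVec_norm hA hz
  have hSu := mulVec_eq_smul_of_forall_mul_le_add_mulVec hpsd hK hu hAu
  have hKu_nonneg : ∀ i, 0 ≤ (K *ᵥ u) i := fun i => by
    simpa [add_mulVec, hSu] using hAu i
  have hKu : K *ᵥ u = 0 := eq_zero_of_dotProduct_eq_zero_of_pos
    (hS.pos_of_nonneg_eigenvector hSnn hu hu0 hSu) hKu_nonneg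
    (dotProduct_mulVec_self_eq_zero_of_transpose_eq_neg hK u)
  obtain ⟨c, hc⟩ := hS.eq_smul_of_nonneg_eigenvector hSnn hx hSx hu hSu
  have hc0 : c ≠ 0 := by rintro rfl; exact hu0 (by rw [hc, zero_smul])
  rw [hc, mulVec_smul] at hKu
  exact (smul_eq_zero.mp hKu).resolve_left hc0

theorem specRad_levinger_eq_of_mulVec_eq_zero [Nonempty ι] (hSsym : Sᵀ = S) (hK : Kᵀ = -K)
    (hA : ∀ i j, 0 ≤ (S + K) i j) (hx : ∀ i, 0 < x i) (hSx : S *ᵥ x = r • x)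
    (hKx : K *ᵥ x = 0) {t : ℝ} (ht : t ∈ Set.Icc (0 : ℝ) 1) :
    specRad ((1 - t) • (S + K) + t • (S + K)ᵀ) = r := by
  refine specRad_eq_of_pos_eigenvector (fun i j => ?_) hx ?_
  · show 0 ≤ (1 - t) * (S + K) i j + t * (S + K) j i
    exact add_nonneg (mul_nonneg (sub_nonneg.mpr ht.2) (hA i j)) (mul_nonneg ht.1 (hA j i))
  · rw [transpose_add, hSsym, hK, add_mulVec, smul_mulVec, smul_mulVec, add_mulVec, add_mulVec,
      neg_mulVec, hSx, hKx, neg_zero, add_zero]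
    module

end SkewPerturbation

theorem conj_first_row_col_eq_zero_iff [DecidableEq ι] {Q K : Matrix ι ι ℝ} (hQ : Qᵀ * Q = 1)
    (hK : Kᵀ = -K) {x : ι → ℝ} {i₀ : ι} (hQx : ∀ i, Q i i₀ = x i) :
    (∀ j, (Qᵀ * K * Q) i₀ j = 0 ∧ (Qᵀ * K * Q) j i₀ = 0) ↔ K *ᵥ x = 0 := by
  have hcol : ∀ j, (Qᵀ * K * Q) j i₀ = (Qᵀ *ᵥ (K *ᵥ x)) j := fun j => by
    rw [mulVec_mulVec, mul_apply]
    simp only [hQx]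
    rfl
  have hskew : (Qᵀ * K * Q)ᵀ = -(Qᵀ * K * Q) := by
    rw [transpose_mul, transpose_mul, transpose_transpose, hK, Matrix.neg_mul, Matrix.mul_neg,
      Matrix.mul_assoc]
  have hrow : ∀ j, (Qᵀ * K * Q) i₀ j = -(Qᵀ * K * Q) j i₀ := fun j => by
    rw [← transpose_apply (Qᵀ * K * Q) j i₀, hskew, Matrix.neg_apply]
  simp only [hrow, neg_eq_zero, and_self, hcol]
  constructor
  · intro h
    rw [← one_mulVec (K *ᵥ x), ← mul_eq_one_comm.mp hQ, ← mulVec_mulVec, funext h]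
    exact mulVec_zero Q
  · intro h j
    rw [h, mulVec_zero, Pi.zero_apply]

theorem levinger_constant_iff_conjugated_skew_block_general {n : ℕ} (hn : 0 < n)
    (S K : Matrix (Fin n) (Fin n) ℝ)
    (hSnn : ∀ i j, 0 ≤ S i j) (hSirr : Irred S) (hSsym : Sᵀ = S)
    (hKskew : Kᵀ = -K)
    (hAnn : ∀ i j, 0 ≤ (S + K) i j)
    (Q : Matrix (Fin n) (Fin n) ℝ) (hQ : Qᵀ * Q = 1)
    (d : Fin n → ℝ) (hdiag : Qᵀ * S * Q = Matrix.diagonal d)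
    (x : Fin n → ℝ) (hx : ∀ i, 0 < x i) (hxev : S *ᵥ x = specRad S • x)
    (hQcol : ∀ i, Q i ⟨0, hn⟩ = x i) :
    (∀ s ∈ Set.Icc (0:ℝ) 1, ∀ t ∈ Set.Icc (0:ℝ) 1,
        specRad ((1 - s) • (S + K) + s • (S + K)ᵀ) =
          specRad ((1 - t) • (S + K) + t • (S + K)ᵀ)) ↔
      (∀ j : Fin n, (Qᵀ * K * Q) ⟨0, hn⟩ j = 0 ∧ (Qᵀ * K * Q) j ⟨0, hn⟩ = 0) := by
  have : Nonempty (Fin n) := ⟨⟨0, hn⟩⟩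
  have hpsd : (specRad S • 1 - S).PosSemidef :=
    posSemidef_smul_one_sub_of_conj_eq_diagonal hQ hdiag
      (le_of_conj_eq_diagonal hSnn hx hxev hQ hdiag)
  rw [conj_first_row_col_eq_zero_iff hQ hKskew hQcol]
  constructor
  · intro hconst
    refine mulVec_eq_zero_of_specRad_add_eq hSirr hSnn hKskew hAnn hx hxev hpsd ?_
    have h0 : (1 - 0 : ℝ) • (S + K) + (0 : ℝ) • (S + K)ᵀ = S + K := by simp
    have hhalf : (1 - 1 / 2 : ℝ) • (S + K) + (1 / 2 : ℝ) • (S + K)ᵀ = S := by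
      rw [transpose_add, hSsym, hKskew]
      module
    have h := hconst 0 ⟨le_rfl, zero_le_one⟩ (1 / 2) ⟨by norm_num, by norm_num⟩
    rwa [h0, hhalf] at h
  · intro hKx s hs t ht
    rw [specRad_levinger_eq_of_mulVec_eq_zero hSsym hKskew hAnn hx hxev hKx hs,
      specRad_levinger_eq_of_mulVec_eq_zero hSsym hKskew hAnn hx hxev hKx ht]

/-- Let `A = S + K` be nonnegative with `S` nonnegative irreducible symmetric
and `K` skew-symmetric, and let `Q` be an orthogonal matrix diagonalizing `S`
with first diagonal entry `ρ(S)` and first column the Perron vector of `S`.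
Then Levinger's function of `A` is constant on `[0,1]` if and only if
`K₁ = QᵀKQ` has zero first row and first column (i.e. `K₁ = [0] ⊕ K₂` for a
skew-symmetric `K₂`). -/
theorem levinger_constant_iff_conjugated_skew_block {n : ℕ} (hn : 0 < n)
    (S K : Matrix (Fin n) (Fin n) ℝ)
    (hSnn : ∀ i j, 0 ≤ S i j) (hSirr : Irred S) (hSsym : Sᵀ = S)
    (hKskew : Kᵀ = -K)
    (hAnn : ∀ i j, 0 ≤ (S + K) i j)
    (Q : Matrix (Fin n) (Fin n) ℝ) (hQ : Qᵀ * Q = 1)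
    (d : Fin n → ℝ) (hdiag : Qᵀ * S * Q = Matrix.diagonal d)
    (hd0 : d ⟨0, hn⟩ = specRad S)
    (x : Fin n → ℝ) (hx : ∀ i, 0 < x i) (hxev : S *ᵥ x = specRad S • x)
    (hQcol : ∀ i, Q i ⟨0, hn⟩ = x i) :
    (∀ s ∈ Set.Icc (0:ℝ) 1, ∀ t ∈ Set.Icc (0:ℝ) 1,
        specRad ((1 - s) • (S + K) + s • (S + K)ᵀ) =
          specRad ((1 - t) • (S + K) + t • (S + K)ᵀ)) ↔
      (∀ j : Fin n, (Qᵀ * K * Q) ⟨0, hn⟩ j = 0 ∧ (Qᵀ * K * Q) j ⟨0, hn⟩ = 0) :=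
  levinger_constant_iff_conjugated_skew_block_general hn S K hSnn hSirr hSsym hKskew hAnn Q hQ d
    hdiag x hx hxev hQcol
end
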